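/- Let n, p, K be positive integers and let L ∈ ℝ^{p×K} and C ∈ ℝ^{n×K}. Suppose (C¹, L¹) and (C², L²), with Cᵃ ∈ ℝ^{n×K} and Lᵃ ∈ ℝ^{p×K} for a = 1, 2, both satisfy: Lᵃ(Cᵃ)ᵀ = L Cᵀ, n^{-1}(Cᵃ)ᵀCᵃ = I_K, and (n/p)(Lᵃ)ᵀLᵃ = diag(λᵃ₁,…,λᵃ_K) with λᵃ₁ > λᵃ₂ > ⋯ > λᵃ_K > 0. Then λ¹_r = λ²_r for every r ∈ {1,…,K}, and for each r ∈ {1,…,K} there exists a sign a_r ∈ {−1, 1} such that the r-th columns satisfy C²_{·r} = a_r C¹_{·r} and L²_{·r} = a_r L¹_{·r}. -/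

import Mathlib

open Matrix BigOperators

/-!
Put `S = n⁻¹ C₁ᵀ C₂`. Orthonormality of the factors turns `L₁ C₁ᵀ = L₂ C₂ᵀ` into `L₂ = L₁ S` and
`L₁ = L₂ Sᵀ`; cancelling `L₂` (its Gram matrix is the invertible `diag λ²` up to scale) gives
`C₂ = C₁ S`, whence `Sᵀ S = n⁻¹ C₂ᵀ C₂ = 1`. Then `diag λ² = Sᵀ diag λ¹ S`, so `S` intertwines
two strictly decreasing diagonals. Such an `S` without zero columns is diagonal and the diagonals
agree; orthogonality makes its diagonal entries `±1`, and these are the signs.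
-/

namespace Matrix

variable {m n k R : Type*} [Fintype k] [CommRing R]

theorem mul_smul_transpose_mul_eq_of_mul_transpose_eq [Fintype n] [DecidableEq k] {c : R}
    {L₁ L₂ : Matrix m k R} {C₁ C₂ : Matrix n k R}
    (hC₂ : c • (C₂ᵀ * C₂) = 1) (h : L₁ * C₁ᵀ = L₂ * C₂ᵀ) :
    L₁ * (c • (C₁ᵀ * C₂)) = L₂ := by
  rw [Matrix.mul_smul, ← Matrix.mul_assoc, h, Matrix.mul_assoc, ← Matrix.mul_smul, hC₂,
    Matrix.mul_one]

theorem eq_of_mul_eq_mul_of_smul_transpose_mul_self_eq_diagonal [Fintype m] [DecidableEq k]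
    {a : R} {d : k → R} {L : Matrix m k R} {X Y : Matrix k n R}
    (hL : a • (Lᵀ * L) = diagonal d) (hd : IsUnit d) (h : L * X = L * Y) : X = Y := by
  have hDXY : diagonal d * X = diagonal d * Y := by
    rw [← hL, smul_mul, smul_mul, Matrix.mul_assoc, Matrix.mul_assoc, h]
  have := (isUnit_diagonal.mpr hd).invertible
  exact mul_right_injective_of_invertible (diagonal d) hDXY

theorem exists_apply_ne_zero_of_transpose_mul_self_eq_one [DecidableEq k] [Nontrivial R]
    {S : Matrix k k R} (hS : Sᵀ * S = 1) (r : k) : ∃ q, S q r ≠ 0 := by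
  by_contra! h
  simpa [mul_apply, h] using congrFun (congrFun hS r) r

theorem apply_eq_of_apply_ne_zero_of_mul_diagonal_eq_diagonal_mul [DecidableEq k]
    [NoZeroDivisors R] {S : Matrix k k R} {d₁ d₂ : k → R}
    (h : S * diagonal d₁ = diagonal d₂ * S) {q r : k} (hqr : S q r ≠ 0) : d₁ r = d₂ q := by
  have hqr' : S q r * d₁ r = d₂ q * S q r := by
    simpa only [mul_diagonal, diagonal_mul] using congrFun (congrFun h q) r
  exact mul_left_cancel₀ hqr (hqr'.trans (mul_comm _ _))

theorem eq_and_isDiag_of_mul_diagonal_eq_diagonal_mul [LinearOrder k] [NoZeroDivisors R]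
    [Preorder R] {S : Matrix k k R} {d₁ d₂ : k → R} (hS : ∀ r, ∃ q, S q r ≠ 0)
    (h : S * diagonal d₁ = diagonal d₂ * S) (h₁ : StrictAnti d₁) (h₂ : StrictAnti d₂) :
    d₁ = d₂ ∧ S.IsDiag := by
  -- `q r` is a row where column `r` is nonzero; `d₁ r = d₂ (q r)` makes `q` strictly monotone.
  choose q hq using hS
  have hd r : d₁ r = d₂ (q r) :=
    apply_eq_of_apply_ne_zero_of_mul_diagonal_eq_diagonal_mul h (hq r)
  have hq_mono : StrictMono q := fun r r' hrr' =>
    h₂.lt_iff_gt.mp (by rw [← hd, ← hd]; exact h₁ hrr')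
  have hdd : d₁ = d₂ := funext fun r => by rw [hd r, hq_mono.apply_eq]
  refine ⟨hdd, fun q' r hne => ?_⟩
  by_contra hS0
  have hd' := apply_eq_of_apply_ne_zero_of_mul_diagonal_eq_diagonal_mul h hS0
  exact hne (h₂.injective (hd'.symm.trans (congrFun hdd r)))

end Matrix

theorem stmt12 (n p K : ℕ)
    (L : Matrix (Fin p) (Fin K) ℝ) (C : Matrix (Fin n) (Fin K) ℝ)
    (C₁ C₂ : Matrix (Fin n) (Fin K) ℝ) (L₁ L₂ : Matrix (Fin p) (Fin K) ℝ)
    (lam₁ lam₂ : Fin K → ℝ)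
    (h₁fac : L₁ * C₁ᵀ = L * Cᵀ)
    (h₂fac : L₂ * C₂ᵀ = L * Cᵀ)
    (h₁C : (n : ℝ)⁻¹ • (C₁ᵀ * C₁) = 1)
    (h₂C : (n : ℝ)⁻¹ • (C₂ᵀ * C₂) = 1)
    (h₁L : ((n : ℝ) / p) • (L₁ᵀ * L₁) = Matrix.diagonal lam₁)
    (h₂L : ((n : ℝ) / p) • (L₂ᵀ * L₂) = Matrix.diagonal lam₂)
    (h₁anti : StrictAnti lam₁) (h₂anti : StrictAnti lam₂)
    (h₂pos : ∀ r, 0 < lam₂ r) :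
    (∀ r : Fin K, lam₁ r = lam₂ r) ∧
    (∀ r : Fin K, ∃ a : ℝ, (a = 1 ∨ a = -1) ∧
      (∀ i : Fin n, C₂ i r = a * C₁ i r) ∧
      (∀ g : Fin p, L₂ g r = a * L₁ g r)) := by
  obtain ⟨S, hS⟩ : ∃ S, S = (n : ℝ)⁻¹ • (C₁ᵀ * C₂) := ⟨_, rfl⟩
  have hfac : L₁ * C₁ᵀ = L₂ * C₂ᵀ := h₁fac.trans h₂fac.symm
  have hL : L₁ * S = L₂ := hS ▸ mul_smul_transpose_mul_eq_of_mul_transpose_eq h₂C hfac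
  have hL' : L₂ * Sᵀ = L₁ := by
    rw [hS, transpose_smul, transpose_mul, transpose_transpose]
    exact mul_smul_transpose_mul_eq_of_mul_transpose_eq h₁C hfac.symm
  have hC : C₁ * S = C₂ := transpose_injective <| by
    rw [transpose_mul]
    refine eq_of_mul_eq_mul_of_smul_transpose_mul_self_eq_diagonal h₂L
      (Pi.isUnit_iff.mpr fun r => (h₂pos r).ne'.isUnit) ?_
    rw [← Matrix.mul_assoc, hL', hfac]
  have hStS : Sᵀ * S = 1 :=
    calc Sᵀ * S = (n : ℝ)⁻¹ • ((C₁ * S)ᵀ * C₂) := by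
          rw [transpose_mul, Matrix.mul_assoc, ← Matrix.mul_smul, ← hS]
      _ = 1 := by rw [hC, h₂C]
  have hD : diagonal lam₂ = Sᵀ * diagonal lam₁ * S := by
    rw [← h₁L, ← h₂L, ← hL, transpose_mul, Matrix.mul_smul, smul_mul]
    simp only [Matrix.mul_assoc]
  have hcomm : S * diagonal lam₂ = diagonal lam₁ * S := by
    rw [hD, ← Matrix.mul_assoc, ← Matrix.mul_assoc, mul_eq_one_comm.mp hStS, Matrix.one_mul]
  obtain ⟨hlam, hdiag⟩ := eq_and_isDiag_of_mul_diagonal_eq_diagonal_mul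
    (exists_apply_ne_zero_of_transpose_mul_self_eq_one hStS) hcomm h₂anti h₁anti
  obtain ⟨s, hs⟩ : ∃ s, diagonal s = S := ⟨_, hdiag.diagonal_diag⟩
  rw [← hs] at hStS hC hL
  refine ⟨fun r => congrFun hlam.symm r, fun r => ⟨s r, ?_, fun i => ?_, fun g => ?_⟩⟩
  · simpa [mul_self_eq_one_iff] using congrFun (congrFun hStS r) r
  · rw [← hC, mul_diagonal, mul_comm]
  · rw [← hL, mul_diagonal, mul_comm]
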